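/- arXiv:math/0601470 — 2 statements merged into one kernel-verified Lean document; each statement's English description precedes it below -/
import Mathlib

section
/- Let K be a set, φ : ℝ → K → K a flow action (φ_{s+t} = φ_s ∘ φ_t), and u : K × ℝ → ℝ a continuous cocycle over the flow, i.e. u(x, s+t) = u(x,t) + u(φ_t x, s). Suppose there exist T > 0 and C = sup_{0 ≤ t ≤ T, x ∈ K} |u(x,t)| such that for every x ∈ K, sup_{|t| ≤ T} u(x,t) ≥ 1. Then for all reals 0 ≤ s ≤ t and all x ∈ K, u(x,s) ≤ max(C, u(x,t) + C). -/
/-- For a cocycle `u` over a flow `φ` on `K`, with `C` a bound for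
`|u(x,t)|` on `0 ≤ t ≤ T` and `sup_{|t| ≤ T} u(x,t) ≥ 1` for all `x`, one has
`u(x,s) ≤ max(C, u(x,t) + C)` for all `0 ≤ s ≤ t`. -/
theorem stmt_0 {K : Type*} [TopologicalSpace K] (φ : ℝ → K → K)
    (hflow : ∀ s t : ℝ, φ (s + t) = φ s ∘ φ t)
    (u : K × ℝ → ℝ) (hu : Continuous u)
    (hcocycle : ∀ (x : K) (s t : ℝ), u (x, s + t) = u (x, t) + u (φ t x, s))
    (T C : ℝ) (hT : 0 < T)
    (hC : ∀ (x : K) (t : ℝ), 0 ≤ t → t ≤ T → |u (x, t)| ≤ C)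
    (hsup : ∀ x : K, ∃ t : ℝ, |t| ≤ T ∧ 1 ≤ u (x, t)) :
    ∀ (x : K) (s t : ℝ), 0 ≤ s → s ≤ t →
      u (x, s) ≤ max C (u (x, t) + C) := by
  intro x s t hs hst
  -- u (z, 0) = 0
  have hzero0 : ∀ z : K, u (φ 0 z, 0) = 0 := by
    intro z
    have := hcocycle z 0 0
    simp at this
    linarith
  have hzero : ∀ (a : ℝ) (y : K), u (φ a y, 0) = 0 := by
    intro a y
    have h := hflow 0 a
    rw [zero_add] at h
    rw [show φ a y = φ 0 (φ a y) from congrFun h y]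
    exact hzero0 _
  by_contra hbad
  push_neg at hbad
  -- step lemma: from a bad point r, find a point r' with value at least 1 more
  have step : ∀ r : ℝ, 0 ≤ r → r ≤ t →
      max C (u (x, t) + C) < u (x, r) →
      ∃ r', 0 ≤ r' ∧ r' ≤ t ∧ u (x, r) + 1 ≤ u (x, r') := by
    intro r hr hrt hb
    -- r > T
    have hrT : T < r := by
      by_contra h
      push_neg at h
      have := hC x r hr h
      have : u (x, r) ≤ C := (abs_le.mp this).2
      have := le_max_left C (u (x, t) + C)
      linarith
    -- t - r > T
    have htr : T < t - r := by
      by_contra h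
      push_neg at h
      have hco := hcocycle x (t - r) r
      rw [show t - r + r = t by ring] at hco
      have habs := hC (φ r x) (t - r) (by linarith) h
      have : -C ≤ u (φ r x, t - r) := (abs_le.mp habs).1
      have : u (x, r) ≤ u (x, t) + C := by linarith
      have := le_max_right C (u (x, t) + C)
      linarith
    obtain ⟨t0, ht0, h1⟩ := hsup (φ r x)
    rcases le_or_gt 0 t0 with h0 | h0
    · -- move forward
      refine ⟨t0 + r, by linarith, ?_, ?_⟩
      · have : t0 ≤ T := (abs_le.mp ht0).2
        linarith
      · have hco := hcocycle x t0 r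
        linarith
    · -- move backward
      have ht0' : -t0 ≤ T := by
        have := (abs_le.mp ht0).1; linarith
      refine ⟨r + t0, by linarith, by linarith, ?_⟩
      have hco := hcocycle x (-t0) (r + t0)
      rw [show -t0 + (r + t0) = r by ring] at hco
      -- u (φ (r+t0) x, -t0) = - u (φ r x, t0)
      have hco2 := hcocycle (φ (r + t0) x) t0 (-t0)
      rw [show t0 + -t0 = (0 : ℝ) by ring, hzero] at hco2
      have hfl : φ (-t0) (φ (r + t0) x) = φ r x := by
        have := hflow (-t0) (r + t0)
        rw [show -t0 + (r + t0) = r by ring] at this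
        exact (congrFun this x).symm
      rw [hfl] at hco2
      -- hco2 : 0 = u (φ (r+t0) x, -t0) + u (φ r x, t0)
      linarith
  -- iterate: for each n, there is r ∈ [0,t] with u(x,r) ≥ u(x,s) + n
  have iter : ∀ n : ℕ, ∃ r, 0 ≤ r ∧ r ≤ t ∧ u (x, s) + n ≤ u (x, r) := by
    intro n
    induction n with
    | zero => exact ⟨s, hs, hst, by simp⟩
    | succ n ih =>
      obtain ⟨r, hr, hrt, hur⟩ := ih
      have hb : max C (u (x, t) + C) < u (x, r) := by
        have : (0 : ℝ) ≤ n := Nat.cast_nonneg n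
        linarith
      obtain ⟨r', hr', hr't, hur'⟩ := step r hr hrt hb
      exact ⟨r', hr', hr't, by push_cast; linarith⟩
  -- boundedness of u(x, ·) on [0, t]
  have hcont : Continuous fun r : ℝ => u (x, r) :=
    hu.comp (Continuous.prodMk_right x)
  have hbdd : BddAbove ((fun r : ℝ => u (x, r)) '' Set.Icc 0 t) :=
    (isCompact_Icc.image hcont).bddAbove
  obtain ⟨M, hM⟩ := hbdd
  obtain ⟨n, hn⟩ := exists_nat_gt (M - u (x, s))
  obtain ⟨r, hr, hrt, hur⟩ := iter n
  have : u (x, r) ≤ M := hM ⟨r, ⟨hr, hrt⟩, rfl⟩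
  linarith
end

section
/- On ℝ² with coordinates (x,y), the Lorentzian metric g₀ = (1/(1 + x²y²)) dx·dy is invariant under the group generated by all maps f_λ(x,y) = (λx, y/λ) for λ > 0. Moreover under the conformal chart ψ(x,y) = (arctan x, arctan y), one has (ψ⁻¹)*(dx·dy) = dθ·dφ / (cos²θ cos²φ) and (ψ⁻¹)*g₀ = dθ·dφ / (cos²θ cos²φ + sin²θ sin²φ). -/
open Real

/-! Both metrics are `dx·dy` times a conformal factor depending only on `xy`. The maps `f_λ`
preserve `xy` and `dx·dy`, hence `g₀`. The chart `ψ⁻¹(θ, φ) = (tan θ, tan φ)` has differential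
`diag(1/cos²θ, 1/cos²φ)`, which rescales `dx·dy` by `1/(cos²θ cos²φ)`, and on its image
`cos²θ cos²φ (1 + tan²θ tan²φ) = cos²θ cos²φ + sin²θ sin²φ`. -/

noncomputable def dxdy (v w : ℝ × ℝ) : ℝ := (v.1 * w.2 + w.1 * v.2) / 2

lemma mul_mul_div_cancel_of_ne_zero {l : ℝ} (hl : l ≠ 0) (a b : ℝ) :
    l * a * (b / l) = a * b := by
  field_simp

lemma dxdy_hyperbolic_scale {l : ℝ} (hl : l ≠ 0) (v w : ℝ × ℝ) :
    dxdy (l * v.1, v.2 / l) (l * w.1, w.2 / l) = dxdy v w := by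
  simp only [dxdy, mul_mul_div_cancel_of_ne_zero hl]

lemma dxdy_diag_scale (a b : ℝ) (v w : ℝ × ℝ) :
    dxdy (v.1 / a, v.2 / b) (w.1 / a, w.2 / b) = dxdy v w / (a * b) := by
  simp only [dxdy]
  ring

lemma cos_sq_mul_cos_sq_mul_one_add_tan_sq_mul_tan_sq {θ φ : ℝ} (hθ : cos θ ≠ 0)
    (hφ : cos φ ≠ 0) :
    cos θ ^ 2 * cos φ ^ 2 * (1 + tan θ ^ 2 * tan φ ^ 2)
      = cos θ ^ 2 * cos φ ^ 2 + sin θ ^ 2 * sin φ ^ 2 := by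
  rw [tan_eq_sin_div_cos, tan_eq_sin_div_cos]
  field_simp

lemma cos_ne_zero_of_abs_lt_pi_div_two {θ : ℝ} (h : |θ| < π / 2) : cos θ ≠ 0 :=
  (cos_pos_of_mem_Ioo (abs_lt.mp h)).ne'

/-- The metric `g₀ = (1/(1+x²y²)) dx·dy` on `ℝ²` is invariant under all
`f_λ(x,y) = (λx, y/λ)`, `λ > 0`; and in the chart `ψ(x,y) = (arctan x, arctan y)`,
`(ψ⁻¹)*(dx·dy) = dθ·dφ/(cos²θ cos²φ)` and
`(ψ⁻¹)*g₀ = dθ·dφ/(cos²θ cos²φ + sin²θ sin²φ)`. -/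
theorem stmt_5
    (g₀ : ℝ × ℝ → ℝ × ℝ → ℝ × ℝ → ℝ)
    (hg₀ : ∀ p v w : ℝ × ℝ,
      g₀ p v w = (1 / (1 + p.1 ^ 2 * p.2 ^ 2)) * (v.1 * w.2 + w.1 * v.2) / 2) :
    (∀ l : ℝ, 0 < l → ∀ p v w : ℝ × ℝ,
      g₀ (l * p.1, p.2 / l) (l * v.1, v.2 / l) (l * w.1, w.2 / l) = g₀ p v w) ∧
    (∀ θ φ : ℝ, |θ| < π / 2 → |φ| < π / 2 → ∀ v w : ℝ × ℝ,
      ((v.1 / cos θ ^ 2) * (w.2 / cos φ ^ 2) + (w.1 / cos θ ^ 2) * (v.2 / cos φ ^ 2)) / 2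
        = ((v.1 * w.2 + w.1 * v.2) / 2) / (cos θ ^ 2 * cos φ ^ 2)) ∧
    (∀ θ φ : ℝ, |θ| < π / 2 → |φ| < π / 2 → ∀ v w : ℝ × ℝ,
      g₀ (tan θ, tan φ) (v.1 / cos θ ^ 2, v.2 / cos φ ^ 2)
          (w.1 / cos θ ^ 2, w.2 / cos φ ^ 2)
        = ((v.1 * w.2 + w.1 * v.2) / 2)
            / (cos θ ^ 2 * cos φ ^ 2 + sin θ ^ 2 * sin φ ^ 2)) := by
  have hg : ∀ p v w, g₀ p v w = dxdy v w / (1 + p.1 ^ 2 * p.2 ^ 2) := by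
    intro p v w
    rw [hg₀, dxdy]
    ring
  refine ⟨fun l hl p v w => ?_, fun θ φ _ _ v w => dxdy_diag_scale _ _ v w, ?_⟩
  · rw [hg, hg, dxdy_hyperbolic_scale hl.ne', ← mul_pow, ← mul_pow,
      mul_mul_div_cancel_of_ne_zero hl.ne']
  · intro θ φ hθ hφ v w
    rw [hg, dxdy_diag_scale, div_div, ← dxdy,
      cos_sq_mul_cos_sq_mul_one_add_tan_sq_mul_tan_sq (cos_ne_zero_of_abs_lt_pi_div_two hθ)
        (cos_ne_zero_of_abs_lt_pi_div_two hφ)]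
end
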